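/- arXiv:2502.03545 — 3 statements merged into one kernel-verified Lean document; each statement's English description precedes it below -/
import Mathlib

section
/- Let G be a functional graph and S a set of nodes. In the graph G − E⁺(S) obtained by deleting all outgoing edges of nodes in S, every node of S lies on no directed cycle; moreover the component of each node i ∈ S in G − E⁺(S) is an in-tree rooted at i, and hence the PageRank of i with α → 1 in G − E⁺(S) equals 1 plus the number of predecessors of i in G − E⁺(S). -/
/-!
Once the out-edges of the nodes of `S` are deleted, every `i ∈ S` is a sink, and in a
functional graph a walk ending at a sink is determined by its first node: at each step the
next node is forced, and the walk must stop exactly when it reaches the sink. Hence no cycle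
passes through `i`, every undirected path to `i` is already directed, and the walks ending at
`i` are in bijection with `i` and its predecessors. Every non-final node of such a walk has
out-degree `1`, so each walk of length `k` contributes `α ^ k` to the PageRank sum, and this
finite sum tends to the number of walks as `α → 1`.
-/

open scoped Classical

/-- A walk in a directed graph given by edge relation `E`. -/
def IsWalk {V : Type*} (E : V → V → Prop) (l : List V) : Prop :=
  l ≠ [] ∧ l.Chain' E

/-- Out-degree of a node. -/
noncomputable def outDeg {V : Type*} (E : V → V → Prop) (u : V) : ℕ :=
  Nat.card {w | E u w}

/-- PageRank of `v`: the sum over all walks `(u₁,…,u_k,v)` ending at `v` of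
`α^k / Π_i deg⁺(u_i)`. -/
noncomputable def prSum {V : Type*} (E : V → V → Prop) (α : ℝ) (v : V) : ℝ :=
  ∑' l : {l : List V // IsWalk E l ∧ l.getLast? = some v},
    α ^ (l.val.length - 1) / (l.val.dropLast.map fun u => (outDeg E u : ℝ)).prod

open Filter Topology

section FunctionalGraph

variable {V : Type*} {R : V → V → Prop} {i : V}

lemma length_le_one_of_isChain_of_head?_eq_sink (hi : ∀ w, ¬ R i w) {l : List V}
    (hl : l.IsChain R) (hhead : l.head? = some i) : l.length ≤ 1 := by
  match l, hl, hhead with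
  | [], _, _ | [_], _, _ => simp
  | a :: b :: _, hl, hhead =>
    obtain rfl : a = i := by simpa using hhead
    exact absurd (List.isChain_cons_cons.mp hl).1 (hi b)

lemma reflTransGen_of_reflTransGen_symm_of_sink (hR : Relator.RightUnique R)
    (hi : ∀ w, ¬ R i w) {u : V} (h : Relation.ReflTransGen (fun a b => R a b ∨ R b a) u i) :
    Relation.ReflTransGen R u i := by
  induction h using Relation.ReflTransGen.head_induction_on with
  | refl => exact .refl
  | @head a c hac _ ih =>
    rcases hac with hac | hca
    · exact .head hac ih
    · -- a backward edge `c → a` into the directed path `c → w → ⋯ → i` forces `w = a`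
      rcases Relation.ReflTransGen.cases_head ih with rfl | ⟨w, hcw, hwi⟩
      · exact absurd hca (hi a)
      · rwa [hR hca hcw]

lemma List.IsChain.eq_of_head?_eq_of_getLast?_eq_sink (hR : Relator.RightUnique R)
    (hi : ∀ w, ¬ R i w) :
    ∀ {l l' : List V}, l.IsChain R → l'.IsChain R → l.head? = l'.head? →
      l.getLast? = some i → l'.getLast? = some i → l = l'
  | [], _, _, _, _, hl, _ | _, [], _, _, _, _, hl => by simp at hl
  | [a], [a'], _, _, hh, _, _ => by simpa using hh
  | [a], _ :: b' :: _, _, hc', hh, hl, _ => by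
      obtain rfl : a = i := by simpa using hl
      obtain rfl : a = _ := by simpa using hh
      exact absurd (List.isChain_cons_cons.mp hc').1 (hi b')
  | _ :: b :: _, [a'], hc, _, hh, _, hl' => by
      obtain rfl : a' = i := by simpa using hl'
      obtain rfl : _ = a' := by simpa using hh
      exact absurd (List.isChain_cons_cons.mp hc).1 (hi b)
  | a :: b :: t, a' :: b' :: t', hc, hc', hh, hl, hl' => by
      obtain rfl : a = a' := by simpa using hh
      obtain ⟨hab, hc⟩ := List.isChain_cons_cons.mp hc
      obtain ⟨hab', hc'⟩ := List.isChain_cons_cons.mp hc'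
      obtain rfl := hR hab hab'
      rw [List.getLast?_cons_cons] at hl hl'
      rw [eq_of_head?_eq_of_getLast?_eq_sink hR hi hc hc' rfl hl hl']

lemma List.IsChain.exists_rel_of_mem_dropLast :
    ∀ {l : List V}, l.IsChain R → ∀ u ∈ l.dropLast, ∃ w, R u w
  | [], _, _, hu | [_], _, _, hu => by simp at hu
  | a :: b :: t, hc, u, hu => by
      obtain ⟨hab, hc⟩ := List.isChain_cons_cons.mp hc
      rw [List.dropLast_cons_cons, List.mem_cons] at hu
      rcases hu with rfl | hu
      · exact ⟨b, hab⟩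
      · exact hc.exists_rel_of_mem_dropLast u hu

lemma outDeg_eq_one (hR : Relator.RightUnique R) {u w : V} (h : R u w) : outDeg R u = 1 := by
  have : {w | R u w} = {w} := Set.eq_singleton_iff_unique_mem.mpr ⟨h, fun _ h' => hR h' h⟩
  rw [outDeg, this, Nat.card_unique]

lemma prSum_eq_tsum_pow (hR : Relator.RightUnique R) (α : ℝ) (v : V) :
    prSum R α v = ∑' l : {l : List V // IsWalk R l ∧ l.getLast? = some v},
      α ^ (l.val.length - 1) := by
  refine tsum_congr fun l => ?_
  rw [List.prod_eq_one, div_one]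
  simp only [List.mem_map]
  rintro _ ⟨u, hu, rfl⟩
  obtain ⟨w, hw⟩ := List.IsChain.exists_rel_of_mem_dropLast l.prop.1.2 u hu
  rw [outDeg_eq_one hR hw, Nat.cast_one]

def walkHead (l : {l : List V // IsWalk R l ∧ l.getLast? = some i}) : V :=
  l.val.head l.prop.1.1

lemma walkHead_bijective (hR : Relator.RightUnique R) (hi : ∀ w, ¬ R i w) :
    Function.Bijective fun l : {l : List V // IsWalk R l ∧ l.getLast? = some i} =>
      (⟨walkHead l, l.val, l.prop.1, List.head?_eq_some_head _, l.prop.2⟩ :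
        {u | ∃ l, IsWalk R l ∧ l.head? = some u ∧ l.getLast? = some i}) := by
  refine ⟨fun l l' h => Subtype.ext ?_, fun ⟨u, l, hl, hhead, hlast⟩ => ⟨⟨l, hl, hlast⟩, ?_⟩⟩
  · refine List.IsChain.eq_of_head?_eq_of_getLast?_eq_sink hR hi l.prop.1.2 l'.prop.1.2 ?_
      l.prop.2 l'.prop.2
    rw [List.head?_eq_some_head l.prop.1.1, List.head?_eq_some_head l'.prop.1.1]
    exact congrArg (some ∘ Subtype.val) h
  · exact Subtype.ext (Option.some_injective _ ((List.head?_eq_some_head hl.1).symm.trans hhead))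

lemma tendsto_tsum_pow_nhds_one {ι : Type*} [Finite ι] (n : ι → ℕ) :
    Tendsto (fun α : ℝ => ∑' x, α ^ n x) (𝓝 1) (𝓝 (Nat.card ι)) := by
  cases nonempty_fintype ι
  simp only [tsum_fintype]
  simpa using
    (continuous_finsetSum Finset.univ fun x _ => continuous_pow (M := ℝ) (n x)).tendsto 1

lemma tendsto_prSum_nhds_one [Finite V] (hR : Relator.RightUnique R) (hi : ∀ w, ¬ R i w) :
    Tendsto (fun α => prSum R α i) (𝓝 1)
      (𝓝 (1 + Nat.card {u | u ≠ i ∧ ∃ l, IsWalk R l ∧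
        l.head? = some u ∧ l.getLast? = some i} : ℝ)) := by
  set P := {u | ∃ l, IsWalk R l ∧ l.head? = some u ∧ l.getLast? = some i}
  have hiP : i ∈ P := ⟨[i], ⟨List.cons_ne_nil _ _, List.isChain_singleton _⟩, rfl, rfl⟩
  have hcard : Nat.card {u | u ≠ i ∧ u ∈ P} + 1 =
      Nat.card {l : List V // IsWalk R l ∧ l.getLast? = some i} := by
    rw [Nat.card_eq_of_bijective _ (walkHead_bijective hR hi), Nat.card_coe_set_eq,
      Nat.card_coe_set_eq, ← Set.ncard_sdiff_singleton_add_one hiP]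
    congr 2
    ext u
    simp [and_comm]
  have : Finite {l : List V // IsWalk R l ∧ l.getLast? = some i} :=
    Finite.of_injective _ (walkHead_bijective hR hi).1
  simp only [prSum_eq_tsum_pow hR]
  convert tendsto_tsum_pow_nhds_one (fun l : {l : List V // IsWalk R l ∧ l.getLast? = some i} =>
    l.val.length - 1) using 2
  rw [← hcard, Nat.cast_succ, add_comm]
  rfl

end FunctionalGraph

/-- In a functional graph, after removing the outgoing edges `E⁺(S)` of the nodes of
`S`, (i) no node of `S` lies on a directed cycle, (ii) the weak component of each
`i ∈ S` is an in-tree rooted at `i` (every weakly connected node has a directed walk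
to `i`), and (iii) the PageRank of `i` as `α → 1⁻` equals `1` plus the number of
predecessors of `i` in the pruned graph. -/
theorem stmt9 {V : Type*} [Fintype V] (E : V → V → Prop)
    (hfun : ∀ u w w', E u w → E u w' → w = w') (S : Set V) :
    (∀ i ∈ S, ¬ ∃ l, IsWalk (fun u v => E u v ∧ u ∉ S) l ∧ 2 ≤ l.length ∧
      l.head? = some i ∧ l.getLast? = some i) ∧
    (∀ i ∈ S, ∀ u : V,
      Relation.ReflTransGen
        (fun a b => (E a b ∧ a ∉ S) ∨ (E b a ∧ b ∉ S)) u i →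
      Relation.ReflTransGen (fun a b => E a b ∧ a ∉ S) u i) ∧
    (∀ i ∈ S, Filter.Tendsto (fun α : ℝ => prSum (fun u v => E u v ∧ u ∉ S) α i)
      (nhdsWithin 1 (Set.Iio 1))
      (nhds (1 + (Nat.card {u | u ≠ i ∧ ∃ l, IsWalk (fun a b => E a b ∧ a ∉ S) l ∧
        l.head? = some u ∧ l.getLast? = some i} : ℝ)))) := by
  have hR : Relator.RightUnique fun u v => E u v ∧ u ∉ S :=
    fun u _ _ h h' => hfun u _ _ h.1 h'.1
  have hsink : ∀ i ∈ S, ∀ w, ¬ (E i w ∧ i ∉ S) := fun _ hi _ h => h.2 hi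
  refine ⟨fun i hi ⟨l, hl, hlen, hhead, _⟩ => ?_,
    fun i hi u => reflTransGen_of_reflTransGen_symm_of_sink hR (hsink i hi),
    fun i hi => (tendsto_prSum_nhds_one hR (hsink i hi)).mono_left nhdsWithin_le_nhds⟩
  have := length_le_one_of_isChain_of_head?_eq_sink (hsink i hi) hl.2 hhead
  omega
end

section
/- Let G = (V,E) be a directed graph, W ⊆ V, and let S ⊆ V be a strongly connected component such that the induced subgraph G[S] is a clique of size |S| ≥ 2. Write ℓ = |W ∩ S| and assume 1 ≤ ℓ < |S|. Then in the graph G − E⁺(W), every node i ∈ W ∩ S satisfies PR¹(i) = |S|/ℓ, where PR¹ denotes PageRank with α = 1 (well-defined here since all walks ending at i stay within the acyclic part S \ W followed by i). -/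
open scoped Classical

/-
The walks ending at `i` in `G − E⁺(W)` are exactly the walks inside the clique `S \ W`
(of size `m = |S| - ℓ`, all of whose nodes keep out-degree `|S| - 1`) followed by one step
into `i`. Grouping them by length, `i` has `m (m - 1)ⁿ` walks with `n + 1` edges, each of
weight `(|S| - 1)^-(n+1)`, so a geometric series gives
`PR¹(i) = 1 + m / (|S| - 1 - (m - 1)) = 1 + m / ℓ = |S| / ℓ`.
-/

open Finset

theorem hasSum_sigma_of_nonneg {ι : Type*} {β : ι → Type*} [∀ i, Fintype (β i)]
    {f : (Σ i, β i) → ℝ} (hf : 0 ≤ f) {s : ℝ} (h : HasSum (fun i => ∑ b, f ⟨i, b⟩) s) :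
    HasSum f s := by
  have hfib : ∀ i, Summable fun b => f ⟨i, b⟩ := fun i => (hasSum_fintype _).summable
  have hsum : Summable f :=
    (summable_sigma_of_nonneg hf).mpr ⟨hfib, by simpa only [tsum_fintype] using h.summable⟩
  rw [hsum.hasSum_iff, hsum.tsum_sigma' hfib]
  simpa only [tsum_fintype] using h.tsum_eq

section Walks

variable {V : Type*} (R : V → V → Prop)

/-- Walks with `n` edges ending at `v`, recorded by their first `n` vertices. -/
abbrev WalksTo (v : V) (n : ℕ) : Type _ :=
  {f : Fin n → V // (List.ofFn f ++ [v]).IsChain R}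

noncomputable def walksToSigmaEquiv (v : V) :
    (Σ n, WalksTo R v n) ≃ {l : List V // IsWalk R l ∧ l.getLast? = some v} :=
  Equiv.ofBijective (fun x => ⟨List.ofFn x.2.1 ++ [v], ⟨by simp, x.2.2⟩, by simp⟩) <| by
    constructor
    · rintro ⟨n, f, _⟩ ⟨m, g, _⟩ h
      obtain ⟨rfl, hfg⟩ := Sigma.mk.inj_iff.mp <| List.ofFn_inj'.mp <|
        List.append_cancel_right (congrArg Subtype.val h)
      cases eq_of_heq hfg
      rfl
    · rintro ⟨l, hwalk, hlast⟩
      obtain ⟨p, rfl⟩ := List.getLast?_eq_some_iff.mp hlast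
      exact ⟨⟨p.length, p.get, by rw [List.ofFn_get]; exact hwalk.2⟩, by simp⟩

@[simp]
theorem walksToSigmaEquiv_apply_coe (v : V) (x : Σ n, WalksTo R v n) :
    (walksToSigmaEquiv R v x : List V) = List.ofFn x.2.1 ++ [v] :=
  rfl

theorem isChain_ofFn_succ_append_singleton {n : ℕ} (f : Fin (n + 1) → V) (b : V) :
    (List.ofFn f ++ [b]).IsChain R ↔
      (List.ofFn (Fin.init f) ++ [f (Fin.last n)]).IsChain R ∧ R (f (Fin.last n)) b := by
  rw [List.ofFn_succ_last, List.append_assoc, List.singleton_append,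
    List.isChain_append_cons_cons]
  simp only [List.isChain_singleton, and_true]
  rfl

def walksToSuccEquiv (b : V) (n : ℕ) :
    WalksTo R b (n + 1) ≃ Σ a : {a // R a b}, WalksTo R a n where
  toFun x :=
    have hx := (isChain_ofFn_succ_append_singleton R x.1 b).mp x.2
    ⟨⟨x.1 (Fin.last n), hx.2⟩, ⟨Fin.init x.1, hx.1⟩⟩
  invFun y := ⟨Fin.snoc y.2.1 y.1.1,
    (isChain_ofFn_succ_append_singleton R _ b).mpr (by simpa using ⟨y.2.2, y.1.2⟩)⟩
  left_inv x := Subtype.ext (Fin.snoc_init_self x.1)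
  right_inv y := Sigma.subtype_ext (Subtype.ext (Fin.snoc_last (α := fun _ => V) _ _))
    (Fin.init_snoc (α := fun _ => V) _ _)

noncomputable def walkWeight (α : ℝ) (l : List V) : ℝ :=
  α ^ l.length / (l.map fun u => (outDeg R u : ℝ)).prod

theorem walkWeight_nonneg {α : ℝ} (hα : 0 ≤ α) (l : List V) : 0 ≤ walkWeight R α l := by
  unfold walkWeight
  have : 0 ≤ (l.map fun u => (outDeg R u : ℝ)).prod :=
    List.prod_nonneg fun x hx => by obtain ⟨u, -, rfl⟩ := List.mem_map.mp hx; positivity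
  positivity

theorem walkWeight_concat (α : ℝ) (l : List V) (a : V) :
    walkWeight R α (l ++ [a]) = α * walkWeight R α l / outDeg R a := by
  simp only [walkWeight, List.length_append, List.length_singleton, List.map_append,
    List.map_singleton, List.prod_append, List.prod_singleton, pow_succ]
  ring

noncomputable def prOfLength [Fintype V] (α : ℝ) (v : V) (n : ℕ) : ℝ :=
  ∑ x : WalksTo R v n, walkWeight R α (List.ofFn x.1)

theorem prSum_eq_of_hasSum [Fintype V] {α s : ℝ} {v : V} (hα : 0 ≤ α)
    (h : HasSum (prOfLength R α v) s) : prSum R α v = s := by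
  have hsummand : ∀ x : Σ n, WalksTo R v n,
      α ^ (((walksToSigmaEquiv R v) x).1.length - 1) /
          ((((walksToSigmaEquiv R v) x).1.dropLast.map fun u => (outDeg R u : ℝ)).prod) =
        walkWeight R α (List.ofFn x.2.1) := by
    intro x
    simp [walkWeight]
  rw [prSum, ← (walksToSigmaEquiv R v).tsum_eq, tsum_congr hsummand]
  exact (hasSum_sigma_of_nonneg
    (f := fun x : Σ n, WalksTo R v n => walkWeight R α (List.ofFn x.2.1))
    (fun x => walkWeight_nonneg R hα _) h).tsum_eq

theorem prOfLength_zero [Fintype V] (α : ℝ) (v : V) : prOfLength R α v 0 = 1 := by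
  have : Unique (WalksTo R v 0) :=
    ⟨⟨⟨Fin.elim0, by simp⟩⟩, fun x => Subtype.ext (funext fun i => i.elim0)⟩
  simp [prOfLength, walkWeight]

theorem prOfLength_succ [Fintype V] (α : ℝ) (b : V) (n : ℕ) :
    prOfLength R α b (n + 1) = ∑ a : {a // R a b}, α * prOfLength R α a n / outDeg R a := by
  rw [prOfLength, Fintype.sum_equiv (walksToSuccEquiv R b n) _
    (fun y => walkWeight R α (List.ofFn y.2.1 ++ [y.1.1])), Fintype.sum_sigma]
  · simp only [walkWeight_concat, prOfLength, Finset.mul_sum, Finset.sum_div]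
  · exact fun x => congrArg (walkWeight R α) List.ofFn_succ_last

end Walks

section CliquePredecessors

variable {V : Type*} [Fintype V] [DecidableEq V] (R : V → V → Prop) (D : Finset V) {d : ℕ}

theorem prOfLength_of_mem (hD : ∀ b ∈ D, ∀ a, R a b ↔ a ∈ D.erase b)
    (hdeg : ∀ u ∈ D, outDeg R u = d) (α : ℝ) (n : ℕ) :
    ∀ b ∈ D, prOfLength R α b n = (α * (#D - 1) / d) ^ n := by
  induction n with
  | zero => intro b _; simp [prOfLength_zero]
  | succ n ih =>
    intro b hb
    rw [prOfLength_succ, ← Finset.sum_subtype (D.erase b) (fun a => (hD b hb a).symm)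
      (fun a => α * prOfLength R α a n / outDeg R a)]
    rw [Finset.sum_congr rfl fun a ha => by
      rw [ih a (mem_of_mem_erase ha), hdeg a (mem_of_mem_erase ha)]]
    rw [sum_const, card_erase_of_mem hb, nsmul_eq_mul, Nat.cast_sub (card_pos.mpr ⟨b, hb⟩),
      pow_succ]
    ring

theorem prOfLength_succ_of_predecessors (hD : ∀ b ∈ D, ∀ a, R a b ↔ a ∈ D.erase b)
    (hdeg : ∀ u ∈ D, outDeg R u = d) {v : V} (hv : ∀ a, R a v ↔ a ∈ D) (α : ℝ) (n : ℕ) :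
    prOfLength R α v (n + 1) = α * #D / d * (α * (#D - 1) / d) ^ n := by
  rw [prOfLength_succ, ← Finset.sum_subtype D (fun a => (hv a).symm)
    (fun a => α * prOfLength R α a n / outDeg R a)]
  rw [Finset.sum_congr rfl fun a ha => by
    rw [prOfLength_of_mem R D hD hdeg α n a ha, hdeg a ha]]
  rw [sum_const, nsmul_eq_mul]
  ring

theorem prSum_eq_of_clique_predecessors (hD : ∀ b ∈ D, ∀ a, R a b ↔ a ∈ D.erase b)
    (hdeg : ∀ u ∈ D, outDeg R u = d) {v : V} (hv : ∀ a, R a v ↔ a ∈ D) {α : ℝ} (hα : 0 ≤ α)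
    (hlt : α * (#D - 1) < d) : prSum R α v = 1 + α * #D / (d - α * (#D - 1)) := by
  apply prSum_eq_of_hasSum R hα
  rw [← hasSum_nat_add_iff' 1]
  simp only [sum_range_one, prOfLength_zero, add_sub_cancel_left,
    prOfLength_succ_of_predecessors R D hD hdeg hv]
  rcases D.eq_empty_or_nonempty with rfl | hne
  · simp
  have hD1 : (0 : ℝ) ≤ #D - 1 := sub_nonneg.mpr (Nat.one_le_cast.mpr hne.card_pos)
  have hd : (0 : ℝ) < d := (mul_nonneg hα hD1).trans_lt hlt
  have hq1 : α * (#D - 1) / d < 1 := (div_lt_one hd).mpr hlt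
  have h := (hasSum_geometric_of_lt_one (by positivity) hq1).mul_left (α * #D / d)
  rwa [one_sub_div hd.ne', inv_div, div_mul_div_cancel₀ hd.ne'] at h

end CliquePredecessors

section CliqueComponent

variable {V : Type*} [DecidableEq V]

structure IsCliqueComponent (E : V → V → Prop) (S : Finset V) : Prop where
  adj : ∀ u ∈ S, ∀ v ∈ S, u ≠ v → E u v
  mem_iff_of_adj : ∀ u v, E u v → (u ∈ S ↔ v ∈ S)

def deleteOut (E : V → V → Prop) (W : Finset V) : V → V → Prop :=
  fun u v => E u v ∧ u ∉ W

variable {E : V → V → Prop} {S W : Finset V}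

theorem IsCliqueComponent.deleteOut_iff_mem_erase (hS : IsCliqueComponent E S)
    (hirr : ∀ v, ¬ E v v) {b : V} (hb : b ∈ S) (a : V) :
    deleteOut E W a b ↔ a ∈ (S \ W).erase b := by
  simp only [deleteOut, mem_erase, mem_sdiff]
  constructor
  · rintro ⟨hab, haW⟩
    exact ⟨fun h => hirr a (h ▸ hab), (hS.mem_iff_of_adj a b hab).mpr hb, haW⟩
  · rintro ⟨hab, haS, haW⟩
    exact ⟨hS.adj a haS b hb hab, haW⟩

theorem IsCliqueComponent.outDeg_deleteOut [Fintype V] (hS : IsCliqueComponent E S)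
    (hirr : ∀ v, ¬ E v v) {u : V} (hu : u ∈ S \ W) : outDeg (deleteOut E W) u = #S - 1 := by
  obtain ⟨huS, huW⟩ := mem_sdiff.mp hu
  have hsucc : {w | deleteOut E W u w} = ↑(S.erase u) := by
    ext w
    simp only [deleteOut, Set.mem_ofPred_eq, coe_erase, Set.mem_sdiff, mem_coe,
      Set.mem_singleton_iff]
    constructor
    · rintro ⟨huw, -⟩
      exact ⟨(hS.mem_iff_of_adj u w huw).mp huS, fun h => hirr u (h ▸ huw)⟩
    · rintro ⟨hwS, hwu⟩
      exact ⟨hS.adj u huS w hwS (Ne.symm hwu), huW⟩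
  rw [outDeg, hsucc, Nat.card_coe_set_eq, Set.ncard_coe_finset, card_erase_of_mem huS]

end CliqueComponent

theorem stmt10_general {V : Type*} [Fintype V] [DecidableEq V] (E : V → V → Prop)
    (S W : Finset V)
    (hirr : ∀ v, ¬ E v v)
    (hclique : ∀ u ∈ S, ∀ v ∈ S, u ≠ v → E u v)
    (hcomp : ∀ u v, E u v → (u ∈ S ↔ v ∈ S)) :
    ∀ i ∈ W ∩ S,
      prSum (fun u v => E u v ∧ u ∉ W) 1 i = (S.card : ℝ) / ((W ∩ S).card : ℝ) := by
  intro i hi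
  obtain ⟨hiW, hiS⟩ := mem_inter.mp hi
  have hS : IsCliqueComponent E S := ⟨hclique, hcomp⟩
  have hv : ∀ a, deleteOut E W a i ↔ a ∈ S \ W := fun a => by
    rw [hS.deleteOut_iff_mem_erase hirr hiS, erase_eq_of_notMem fun h => (mem_sdiff.mp h).2 hiW]
  have hcard : (#(S \ W) : ℝ) + #(W ∩ S) = #S := by
    rw [inter_comm]; exact_mod_cast card_sdiff_add_card_inter S W
  have hℓ : (0 : ℝ) < #(W ∩ S) := by exact_mod_cast card_pos.mpr ⟨i, hi⟩
  have hs : ((#S - 1 : ℕ) : ℝ) = #S - 1 := by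
    rw [Nat.cast_sub (card_pos.mpr ⟨i, hiS⟩), Nat.cast_one]
  change prSum (deleteOut E W) 1 i = _
  rw [prSum_eq_of_clique_predecessors (deleteOut E W) (S \ W)
    (fun b hb => hS.deleteOut_iff_mem_erase hirr (mem_sdiff.mp hb).1)
    (fun u => hS.outDeg_deleteOut hirr) hv zero_le_one (by rw [hs]; linarith), hs,
    show (#S : ℝ) - 1 - 1 * (#(S \ W) - 1) = #(W ∩ S) by linarith]
  field_simp
  linarith

/-- If `S` is a clique component (every ordered pair of distinct nodes of `S` is an
edge, no edges between `S` and its complement), `W` a selected set with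
`ℓ = |W ∩ S|`, `1 ≤ ℓ < |S|`, then in `G − E⁺(W)` every `i ∈ W ∩ S` has PageRank
(with `α = 1`) equal to `|S|/ℓ`. -/
theorem stmt10 {V : Type*} [Fintype V] [DecidableEq V] (E : V → V → Prop)
    (S W : Finset V)
    (hirr : ∀ v, ¬ E v v)
    (hclique : ∀ u ∈ S, ∀ v ∈ S, u ≠ v → E u v)
    (hcomp : ∀ u v, E u v → (u ∈ S ↔ v ∈ S))
    (hS2 : 2 ≤ S.card)
    (hl1 : 1 ≤ (W ∩ S).card) (hl2 : (W ∩ S).card < S.card) :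
    ∀ i ∈ W ∩ S,
      prSum (fun u v => E u v ∧ u ∉ W) 1 i = (S.card : ℝ) / ((W ∩ S).card : ℝ) :=
  stmt10_general E S W hirr hclique hcomp
end

section
/- Let G=(V,E) be a directed graph and W ⊆ V with the property that W contains all 'sinks' relevant below; let T be the set of nodes of V∖W that are predecessors (in G − E⁺(W)) of some node of W. Suppose in G − E⁺(W) every node of T has at least one outgoing edge and every outgoing edge of a node of T goes either to a node of W or to a node of T. Then Σ_{v∈T} (d_w(v)/deg⁺(v))·PR¹(v) = |T|, where d_w(v) is the number of edges from v to W, deg⁺ the out-degree in G − E⁺(W), and PR¹ is PageRank with α=1 on G − E⁺(W). -/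
/-!
Sum the PageRank recursion over `T`. Since no edge enters `T` from outside, every
contribution `PR(u)/deg⁺(u)` received inside `T` comes from some `u ∈ T` along an edge that
stays in `T`, so `Σ_T PR = |T| + Σ_{u∈T} d_T(u)·PR(u)/deg⁺(u)`. As the out-edges of `u ∈ T`
split as `deg⁺(u) = d_W(u) + d_T(u)`, the difference is exactly `Σ_T d_W(u)·PR(u)/deg⁺(u)`.
-/

open scoped Classical

open Finset

section Flow

variable {V : Type*} [Fintype V] (E : V → V → Prop)

theorem sum_sum_filter_pred_eq_sum_card_nsmul {M : Type*} [AddCommMonoid M] (T : Finset V)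
    (hinto : ∀ u v, E u v → v ∈ T → u ∈ T) (f : V → M) :
    ∑ v ∈ T, ∑ u ∈ univ.filter (fun u => E u v), f u =
      ∑ u ∈ T, (T.filter (fun v => E u v)).card • f u := by
  simp_rw [← sum_const]
  refine sum_comm' fun v u => ?_
  simp only [mem_filter, mem_univ, true_and]
  exact ⟨fun ⟨hv, he⟩ => ⟨⟨hv, he⟩, hinto u v he hv⟩, fun ⟨hve, _⟩ => hve⟩

theorem card_filter_add_card_filter_of_forall_mem_or_mem {W T : Finset V} (hdisj : Disjoint W T)
    {u : V} (hto : ∀ v, E u v → v ∈ W ∨ v ∈ T) :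
    (W.filter (fun w => E u w)).card + (T.filter (fun w => E u w)).card =
      (univ.filter (fun w => E u w)).card := by
  rw [← card_union_of_disjoint (disjoint_filter_filter hdisj), ← filter_union]
  congr 1
  ext v
  simp only [mem_filter, mem_union, mem_univ, true_and]
  exact ⟨And.right, fun he => ⟨hto v he, he⟩⟩

end Flow

/-- Conservation lemma: if `T` consists of unselected predecessors of `W`, every node
of `T` has positive out-degree, all edges leaving `T` go to `W ∪ T`, and all edges
into `T` come from `T`, then for PageRank with `α = 1` (satisfying the recursion on
`T`), `Σ_{v∈T} (d_w(v)/deg⁺(v))·PR(v) = |T|`. -/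
theorem stmt12 {V : Type*} [Fintype V] (E : V → V → Prop) (W T : Finset V)
    (pr : V → ℝ)
    (hdisj : Disjoint W T)
    (hrec : ∀ v ∈ T, pr v = 1 + ∑ u ∈ Finset.univ.filter (fun u => E u v),
      pr u / ((Finset.univ.filter (fun w => E u w)).card : ℝ))
    (hout : ∀ v ∈ T, 0 < (Finset.univ.filter (fun w => E v w)).card)
    (hto : ∀ u ∈ T, ∀ v, E u v → v ∈ W ∨ v ∈ T)
    (hinto : ∀ u v, E u v → v ∈ T → u ∈ T) :
    ∑ v ∈ T, (((W.filter (fun w => E v w)).card : ℝ) /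
      ((Finset.univ.filter (fun w => E v w)).card : ℝ)) * pr v = (T.card : ℝ) := by
  set deg : V → ℝ := fun u => ((univ.filter (fun w => E u w)).card : ℝ)
  set dT : V → ℝ := fun u => ((T.filter (fun w => E u w)).card : ℝ)
  have hsum : ∑ v ∈ T, pr v = T.card + ∑ u ∈ T, dT u * (pr u / deg u) := by
    rw [sum_congr rfl hrec, sum_add_distrib, sum_const, nsmul_one,
      sum_sum_filter_pred_eq_sum_card_nsmul E T hinto]
    simp only [nsmul_eq_mul, dT, deg]
  have hterm : ∀ u ∈ T, ((W.filter (fun w => E u w)).card : ℝ) / deg u * pr u =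
      pr u - dT u * (pr u / deg u) := by
    intro u hu
    have hdeg : deg u ≠ 0 := Nat.cast_ne_zero.mpr (hout u hu).ne'
    have hsplit := card_filter_add_card_filter_of_forall_mem_or_mem E hdisj (hto u hu)
    field_simp
    simp only [deg, dT, ← hsplit]
    push_cast
    ring
  rw [sum_congr rfl hterm, sum_sub_distrib, hsum]
  ring
end
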